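/- Let θ₀ ∈ (0,π), let w ∈ ℝ² be a unit vector, and let γ:[0,ℓ]→ℝ² be a C¹ curve parametrized by arclength such that for every t the angle between the line ℝ·γ̇(t) and the line ℝ·w is at most (π−θ₀)/2. If the image of γ is contained in a closed ball of radius R, then ℓ ≤ 2R/sin(θ₀/2). -/

import Mathlib

/-!
Project the curve onto the direction `w`: the cone condition says that `t ↦ ⟪w, γ t⟫` has
derivative of absolute value at least `sin (θ₀ / 2)`. By Darboux's theorem this derivative has
constant sign, so the projection moves monotonically by at least `ℓ sin (θ₀ / 2)`, while any
two points of a ball of radius `R` have projections at most `2R` apart.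
-/

open Set Metric

/-- The angle in `[0, π/2]` between the lines spanned by two nonzero vectors of the
Euclidean plane. -/
noncomputable def lineAngle (u v : EuclideanSpace ℝ (Fin 2)) : ℝ :=
  Real.arccos (|(inner ℝ u v : ℝ)| / (‖u‖ * ‖v‖))

open Real

theorem cos_le_abs_inner_div_of_lineAngle_le {u v : EuclideanSpace ℝ (Fin 2)} {α : ℝ}
    (hα : α ≤ π) (h : lineAngle u v ≤ α) :
    cos α ≤ |inner ℝ u v| / (‖u‖ * ‖v‖) := by
  have hle : |inner ℝ u v| / (‖u‖ * ‖v‖) ≤ 1 := by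
    simpa only [abs_div, abs_mul, abs_norm] using abs_real_inner_div_norm_mul_norm_le_one u v
  have hnonneg : 0 ≤ |inner ℝ u v| / (‖u‖ * ‖v‖) := by positivity
  calc cos α ≤ cos (lineAngle u v) := cos_le_cos_of_nonneg_of_le_pi (arccos_nonneg _) hα h
    _ = |inner ℝ u v| / (‖u‖ * ‖v‖) := cos_arccos (by linarith) hle

section MeanValue

variable {f f' : ℝ → ℝ} {a b s : ℝ}

theorem mul_sub_le_sub_of_le_hasDerivWithinAt (hab : a ≤ b)
    (hf : ∀ t ∈ Icc a b, HasDerivWithinAt f (f' t) (Icc a b) t)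
    (hs : ∀ t ∈ Icc a b, s ≤ f' t) : s * (b - a) ≤ f b - f a := by
  have hmono : MonotoneOn (fun t ↦ f t - s * t) (Icc a b) := by
    have hderiv : ∀ t ∈ Icc a b,
        HasDerivWithinAt (fun t ↦ f t - s * t) (f' t - s) (Icc a b) t :=
      fun t ht ↦ (hf t ht).sub (by simpa using (hasDerivWithinAt_id t _).const_mul s)
    exact monotoneOn_of_hasDerivWithinAt_nonneg (convex_Icc a b)
      (fun t ht ↦ (hderiv t ht).continuousWithinAt)
      (fun t ht ↦ (hderiv t (interior_subset ht)).mono interior_subset)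
      (fun t ht ↦ sub_nonneg.2 (hs t (interior_subset ht)))
  have := hmono (left_mem_Icc.2 hab) (right_mem_Icc.2 hab) hab
  simp only at this
  linarith

/-- By Darboux's theorem `f'` has constant sign, even though it need not be continuous. -/
theorem mul_sub_le_abs_sub_of_le_abs_hasDerivWithinAt (hab : a ≤ b)
    (hf : ∀ t ∈ Icc a b, HasDerivWithinAt f (f' t) (Icc a b) t) (hs : 0 < s)
    (hlow : ∀ t ∈ Icc a b, s ≤ |f' t|) : s * (b - a) ≤ |f b - f a| := by
  have hne : ∀ t ∈ Icc a b, f' t ≠ 0 := fun t ht ↦ abs_pos.1 (hs.trans_le (hlow t ht))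
  rcases hasDerivWithinAt_forall_lt_or_forall_gt_of_forall_ne (convex_Icc a b) hf hne with
    hneg | hpos
  · calc s * (b - a) ≤ (-f) b - (-f) a :=
          mul_sub_le_sub_of_le_hasDerivWithinAt hab (fun t ht ↦ (hf t ht).neg)
            fun t ht ↦ (hlow t ht).trans_eq (abs_of_neg (hneg t ht))
      _ = -(f b - f a) := by simp only [Pi.neg_apply]; ring
      _ ≤ |f b - f a| := neg_le_abs _
  · calc s * (b - a) ≤ f b - f a :=
          mul_sub_le_sub_of_le_hasDerivWithinAt hab hf
            fun t ht ↦ (hlow t ht).trans_eq (abs_of_pos (hpos t ht))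
      _ ≤ |f b - f a| := le_abs_self _

end MeanValue

/-- Let `θ₀ ∈ (0,π)`, let `w` be a unit vector of the plane, and let
`γ : [0,ℓ] → ℝ²` be a `C¹` curve parametrized by arclength such that for every `t` the angle
between the tangent line `ℝ·γ̇(t)` and the line `ℝ·w` is at most `(π−θ₀)/2`.  If the image of
`γ` is contained in a closed ball of radius `R`, then `ℓ ≤ 2R/sin(θ₀/2)`. -/
theorem length_bound_of_cone_tangency
    (θ₀ : ℝ) (hθ₀ : 0 < θ₀) (hθ₀' : θ₀ < Real.pi)
    (w : EuclideanSpace ℝ (Fin 2)) (hw : ‖w‖ = 1)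
    (ℓ : ℝ) (hℓ : 0 ≤ ℓ) (γ γ' : ℝ → EuclideanSpace ℝ (Fin 2))
    (hγ' : ∀ t ∈ Icc 0 ℓ, HasDerivAt γ (γ' t) t)
    (harc : ∀ t ∈ Icc 0 ℓ, ‖γ' t‖ = 1)
    (hangle : ∀ t ∈ Icc 0 ℓ, lineAngle (γ' t) w ≤ (Real.pi - θ₀) / 2)
    (c : EuclideanSpace ℝ (Fin 2)) (R : ℝ)
    (himg : ∀ t ∈ Icc 0 ℓ, γ t ∈ closedBall c R) :
    ℓ ≤ 2 * R / Real.sin (θ₀ / 2) := by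
  have hs : 0 < sin (θ₀ / 2) := sin_pos_of_pos_of_lt_pi (by linarith) (by linarith)
  have hlow : ∀ t ∈ Icc 0 ℓ, sin (θ₀ / 2) ≤ |inner ℝ w (γ' t)| := fun t ht ↦ by
    have := cos_le_abs_inner_div_of_lineAngle_le (by linarith [pi_pos]) (hangle t ht)
    rwa [harc t ht, hw, one_mul, div_one, real_inner_comm, sub_div, cos_pi_div_two_sub] at this
  have hproj : ∀ t ∈ Icc 0 ℓ, HasDerivWithinAt (fun t ↦ inner ℝ w (γ t))
      (inner ℝ w (γ' t)) (Icc 0 ℓ) t :=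
    fun t ht ↦ ((innerSL ℝ w).hasFDerivAt.comp_hasDerivAt t (hγ' t ht)).hasDerivWithinAt
  have hγ0 := mem_closedBall.1 (himg 0 (left_mem_Icc.2 hℓ))
  have hγℓ := mem_closedBall.1 (himg ℓ (right_mem_Icc.2 hℓ))
  rw [le_div_iff₀ hs]
  calc ℓ * sin (θ₀ / 2) = sin (θ₀ / 2) * (ℓ - 0) := by ring
    _ ≤ |inner ℝ w (γ ℓ) - inner ℝ w (γ 0)| :=
      mul_sub_le_abs_sub_of_le_abs_hasDerivWithinAt hℓ hproj hs hlow
    _ ≤ ‖w‖ * ‖γ ℓ - γ 0‖ := by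
      rw [← inner_sub_right]; exact abs_real_inner_le_norm _ _
    _ ≤ dist (γ ℓ) c + dist (γ 0) c := by
      rw [hw, one_mul, ← dist_eq_norm]; exact dist_triangle_right _ _ _
    _ ≤ 2 * R := by linarith
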